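/- arXiv:1309.3696 — 2 statements merged into one kernel-verified Lean document; each statement's English description precedes it below -/
import Mathlib

section
/- Let S = R ∪ B be a two-colored finite point set in ℝ². If D and D' are two distinct rectangles of the family R̄₁ and D ∩ D' ≠ ∅, then D and D' have a piercing intersection or a corner intersection. The same holds for the families R̄₂, R̄₃, and R̄₄. -/
open Set

/-- Points of the plane. -/
abbrev Pt : Type := ℝ × ℝ

/-- `D a b` is the closed axis-aligned rectangle having the segment from `a` to `b`
as a diagonal, i.e. the minimum enclosing axis-aligned rectangle of `a` and `b`. -/
def D (a b : Pt) : Set Pt :=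
  Set.Icc (min a.1 b.1) (max a.1 b.1) ×ˢ Set.Icc (min a.2 b.2) (max a.2 b.2)

/-- `Pierces R₂ R₁` : the projection of `R₁` onto the x-axis contains that of `R₂`,
and the projection of `R₂` onto the y-axis contains that of `R₁`. -/
def Pierces (R₂ R₁ : Set Pt) : Prop :=
  Prod.fst '' R₂ ⊆ Prod.fst '' R₁ ∧ Prod.snd '' R₁ ⊆ Prod.snd '' R₂

/-- Two rectangles have a piercing intersection if one of them pierces the other. -/
def PiercingInter (A B : Set Pt) : Prop := Pierces A B ∨ Pierces B A

/-- The four corner points of an axis-aligned rectangle given as a set. -/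
def corners (A : Set Pt) : Set Pt :=
  {c | (c.1 = sInf (Prod.fst '' A) ∨ c.1 = sSup (Prod.fst '' A)) ∧
       (c.2 = sInf (Prod.snd '' A) ∨ c.2 = sSup (Prod.snd '' A))}

/-- `A` and `B` have a corner intersection (w.r.t. the point set `P`):
each rectangle contains exactly one of the corner points of the other,
and these two contained corners are not elements of `P`. -/
def CornerInter (P : Set Pt) (A B : Set Pt) : Prop :=
  (∃! c, c ∈ corners B ∧ c ∈ A) ∧ (∃! c, c ∈ corners A ∧ c ∈ B) ∧
  ∀ c, ((c ∈ corners B ∧ c ∈ A) ∨ (c ∈ corners A ∧ c ∈ B)) → c ∉ P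

/-- `A` and `B` have a point intersection: their intersection is precisely
a single point of `P`. -/
def PointInter (P : Set Pt) (A B : Set Pt) : Prop := ∃ s ∈ P, A ∩ B = {s}

/-- `A` is a rectangle on the point set `P`. -/
def IsRectOn (P : Set Pt) (A : Set Pt) : Prop :=
  ∃ a b, a ∈ P ∧ b ∈ P ∧ a ≠ b ∧ A = D a b ∧ A ∩ P = {a, b}

/-- A complete set of rectangles on `P`: for every two elements `D a b`, `D a' b'`
of `H` that have a corner intersection, the other two rectangles of the form
`D p q` (with `p ∈ {a,a'}`, `q ∈ {b,b'}`) having a piercing intersection with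
each other also belong to `H`. -/
def CompleteOn (P : Set Pt) (H : Set (Set Pt)) : Prop :=
  (∀ A ∈ H, IsRectOn P A) ∧
  ∀ a b a' b' : Pt, a ∈ P → b ∈ P → a' ∈ P → b' ∈ P →
    D a b ∈ H → D a' b' ∈ H → CornerInter P (D a b) (D a' b') →
    PiercingInter (D a b') (D a' b) →
    D a b' ∈ H ∧ D a' b ∈ H

/-- Adjacency in the graph `G_{p,c}(H)` : a piercing or a corner intersection. -/
def AdjPC (P : Set Pt) (A B : Set Pt) : Prop := PiercingInter A B ∨ CornerInter P A B

/-- `I` is an independent set of the graph `G_{p,c}(H)`. -/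
def IndepPC (P : Set Pt) (H I : Set (Set Pt)) : Prop :=
  I ⊆ H ∧ I.Pairwise fun A B => ¬ AdjPC P A B

/-- The maximum size of an independent set of the graph `G_{p,c}(H)`. -/
noncomputable def maxIndepPC (P : Set Pt) (H : Set (Set Pt)) : ℕ :=
  sSup {n | ∃ I, IndepPC P H I ∧ I.ncard = n}

/-- The family `𝓡̄(S)` of bichromatic rectangles of `S = R ∪ B`. -/
def biRS (R B : Set Pt) : Set (Set Pt) :=
  {A | ∃ p ∈ R, ∃ q ∈ B, A = D p q ∧ A ∩ (R ∪ B) = {p, q}}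

/-- `𝓡̄₁`: the rectangles of `𝓡̄(S)` with a blue point at the bottom-left corner. -/
def biFam1 (R B : Set Pt) : Set (Set Pt) :=
  {A | ∃ p ∈ R, ∃ q ∈ B, A = D p q ∧ A ∩ (R ∪ B) = {p, q} ∧
    (min p.1 q.1, min p.2 q.2) ∈ B}

/-- `𝓡̄₂`: the rectangles of `𝓡̄(S)` with a red point at the bottom-left corner. -/
def biFam2 (R B : Set Pt) : Set (Set Pt) :=
  {A | ∃ p ∈ R, ∃ q ∈ B, A = D p q ∧ A ∩ (R ∪ B) = {p, q} ∧
    (min p.1 q.1, min p.2 q.2) ∈ R}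

/-- `𝓡̄₃`: the rectangles of `𝓡̄(S)` with a blue point at the bottom-right corner. -/
def biFam3 (R B : Set Pt) : Set (Set Pt) :=
  {A | ∃ p ∈ R, ∃ q ∈ B, A = D p q ∧ A ∩ (R ∪ B) = {p, q} ∧
    (max p.1 q.1, min p.2 q.2) ∈ B}

/-- `𝓡̄₄`: the rectangles of `𝓡̄(S)` with a red point at the bottom-right corner. -/
def biFam4 (R B : Set Pt) : Set (Set Pt) :=
  {A | ∃ p ∈ R, ∃ q ∈ B, A = D p q ∧ A ∩ (R ∪ B) = {p, q} ∧
    (max p.1 q.1, min p.2 q.2) ∈ R}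

lemma mem_rect {x1 x2 y1 y2 : ℝ} {c : Pt} :
    c ∈ Icc x1 x2 ×ˢ Icc y1 y2 ↔ x1 ≤ c.1 ∧ c.1 ≤ x2 ∧ y1 ≤ c.2 ∧ c.2 ≤ y2 := by
  simp only [Set.mem_prod, Set.mem_Icc]; tauto

lemma fst_rect {x1 x2 y1 y2 : ℝ} (hy : y1 ≤ y2) :
    Prod.fst '' (Icc x1 x2 ×ˢ Icc y1 y2) = Icc x1 x2 :=
  Set.fst_image_prod _ (nonempty_Icc.mpr hy)

lemma snd_rect {x1 x2 y1 y2 : ℝ} (hx : x1 ≤ x2) :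
    Prod.snd '' (Icc x1 x2 ×ˢ Icc y1 y2) = Icc y1 y2 :=
  Set.snd_image_prod (nonempty_Icc.mpr hx) _

lemma rect_pierces {x1 x2 y1 y2 x1' x2' y1' y2' : ℝ}
    (hx : x1 ≤ x2) (hy : y1 ≤ y2) (hx' : x1' ≤ x2') (hy' : y1' ≤ y2')
    (h1 : x1' ≤ x1) (h2 : x2 ≤ x2') (h3 : y1 ≤ y1') (h4 : y2' ≤ y2) :
    Pierces (Icc x1 x2 ×ˢ Icc y1 y2) (Icc x1' x2' ×ˢ Icc y1' y2') := by
  constructor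
  · rw [fst_rect hy, fst_rect hy']; exact Icc_subset_Icc h1 h2
  · rw [snd_rect hx', snd_rect hx]; exact Icc_subset_Icc h3 h4

lemma corners_rect {x1 x2 y1 y2 : ℝ} (hx : x1 ≤ x2) (hy : y1 ≤ y2) {c : Pt} :
    c ∈ corners (Icc x1 x2 ×ˢ Icc y1 y2) ↔ (c.1 = x1 ∨ c.1 = x2) ∧ (c.2 = y1 ∨ c.2 = y2) := by
  unfold corners
  rw [mem_setOf_eq, fst_rect hy, snd_rect hx, csInf_Icc hx, csSup_Icc hx, csInf_Icc hy, csSup_Icc hy]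

lemma corners_sub {x1 x2 y1 y2 : ℝ} (hx : x1 ≤ x2) (hy : y1 ≤ y2) {c : Pt}
    (h : c ∈ corners (Icc x1 x2 ×ˢ Icc y1 y2)) : c ∈ Icc x1 x2 ×ˢ Icc y1 y2 := by
  rw [corners_rect hx hy] at h
  rw [mem_rect]
  obtain ⟨h1 | h1, h2 | h2⟩ := h <;> rw [h1, h2] <;> refine ⟨?_, ?_, ?_, ?_⟩ <;>
    first | exact le_rfl | exact hx | exact hy

lemma cornerInter_symm {P A B : Set Pt} (h : CornerInter P A B) : CornerInter P B A :=
  ⟨h.2.1, h.1, fun c hc => h.2.2 c hc.symm⟩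

lemma corner_case {S : Set Pt} {x1 x2 y1 y2 x1' x2' y1' y2' : ℝ} {a₁ a₂ a₁' a₂' : Pt}
    (hx : x1 ≤ x2) (hy : y1 ≤ y2) (hx' : x1' ≤ x2') (hy' : y1' ≤ y2')
    (o1 : x1' ≤ x2) (o2 : y1 ≤ y2')
    (p1 : x1 < x1') (p2 : x2 < x2') (p3 : y1' < y1) (p4 : y2' < y2)
    (hA : (Icc x1 x2 ×ˢ Icc y1 y2) ∩ S = {a₁, a₂})
    (hA' : (Icc x1' x2' ×ˢ Icc y1' y2') ∩ S = {a₁', a₂'})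
    (h11 : a₁ ≠ a₁') (h12 : a₁ ≠ a₂') (h21 : a₂ ≠ a₁') (h22 : a₂ ≠ a₂') :
    CornerInter S (Icc x1 x2 ×ˢ Icc y1 y2) (Icc x1' x2' ×ˢ Icc y1' y2') := by
  have hc1 : ((x1', y2') : Pt) ∈ Icc x1 x2 ×ˢ Icc y1 y2 :=
    mem_rect.mpr ⟨p1.le, o1, o2, p4.le⟩
  have hc2 : ((x2, y1) : Pt) ∈ Icc x1' x2' ×ˢ Icc y1' y2' :=
    mem_rect.mpr ⟨o1, p2.le, p3.le, o2⟩
  refine ⟨⟨(x1', y2'), ⟨(corners_rect hx' hy').mpr ⟨Or.inl rfl, Or.inr rfl⟩, hc1⟩, ?_⟩,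
    ⟨(x2, y1), ⟨(corners_rect hx hy).mpr ⟨Or.inr rfl, Or.inl rfl⟩, hc2⟩, ?_⟩, ?_⟩
  · rintro c ⟨hcor, hcA⟩
    rw [corners_rect hx' hy'] at hcor
    rw [mem_rect] at hcA
    obtain ⟨h1 | h1, h2 | h2⟩ := hcor
    · exfalso; rw [h2] at hcA; linarith [hcA.2.2.1]
    · exact Prod.ext h1 h2
    · exfalso; rw [h1] at hcA; linarith [hcA.2.1]
    · exfalso; rw [h1] at hcA; linarith [hcA.2.1]
  · rintro c ⟨hcor, hcA⟩
    rw [corners_rect hx hy] at hcor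
    rw [mem_rect] at hcA
    obtain ⟨h1 | h1, h2 | h2⟩ := hcor
    · exfalso; rw [h1] at hcA; linarith [hcA.1]
    · exfalso; rw [h1] at hcA; linarith [hcA.1]
    · exact Prod.ext h1 h2
    · exfalso; rw [h2] at hcA; linarith [hcA.2.2.2]
  · rintro c (⟨hcor, hcA⟩ | ⟨hcor, hcA'⟩) hcS
    · have hcA' := corners_sub hx' hy' hcor
      have m1 : c ∈ ({a₁, a₂} : Set Pt) := hA ▸ ⟨hcA, hcS⟩
      have m2 : c ∈ ({a₁', a₂'} : Set Pt) := hA' ▸ ⟨hcA', hcS⟩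
      rcases m1 with rfl | rfl <;> rcases m2 with h | h <;>
        first | exact h11 h | exact h12 h | exact h21 h | exact h22 h
    · have hcA := corners_sub hx hy hcor
      have m1 : c ∈ ({a₁, a₂} : Set Pt) := hA ▸ ⟨hcA, hcS⟩
      have m2 : c ∈ ({a₁', a₂'} : Set Pt) := hA' ▸ ⟨hcA', hcS⟩
      rcases m1 with rfl | rfl <;> rcases m2 with h | h <;>
        first | exact h11 h | exact h12 h | exact h21 h | exact h22 h

lemma anti_corner_case {S : Set Pt} {x1 x2 y1 y2 x1' x2' y1' y2' : ℝ} {a₁ a₂ a₁' a₂' : Pt}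
    (hx : x1 ≤ x2) (hy : y1 ≤ y2) (hx' : x1' ≤ x2') (hy' : y1' ≤ y2')
    (o1 : x1 ≤ x2') (o2 : y1 ≤ y2')
    (p1 : x1' < x1) (p2 : x2' < x2) (p3 : y1' < y1) (p4 : y2' < y2)
    (hA : (Icc x1 x2 ×ˢ Icc y1 y2) ∩ S = {a₁, a₂})
    (hA' : (Icc x1' x2' ×ˢ Icc y1' y2') ∩ S = {a₁', a₂'})
    (h11 : a₁ ≠ a₁') (h12 : a₁ ≠ a₂') (h21 : a₂ ≠ a₁') (h22 : a₂ ≠ a₂') :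
    CornerInter S (Icc x1 x2 ×ˢ Icc y1 y2) (Icc x1' x2' ×ˢ Icc y1' y2') := by
  have hc1 : ((x2', y2') : Pt) ∈ Icc x1 x2 ×ˢ Icc y1 y2 :=
    mem_rect.mpr ⟨o1, p2.le, o2, p4.le⟩
  have hc2 : ((x1, y1) : Pt) ∈ Icc x1' x2' ×ˢ Icc y1' y2' :=
    mem_rect.mpr ⟨p1.le, o1, p3.le, o2⟩
  refine ⟨⟨(x2', y2'), ⟨(corners_rect hx' hy').mpr ⟨Or.inr rfl, Or.inr rfl⟩, hc1⟩, ?_⟩,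
    ⟨(x1, y1), ⟨(corners_rect hx hy).mpr ⟨Or.inl rfl, Or.inl rfl⟩, hc2⟩, ?_⟩, ?_⟩
  · rintro c ⟨hcor, hcA⟩
    rw [corners_rect hx' hy'] at hcor
    rw [mem_rect] at hcA
    obtain ⟨h1 | h1, h2 | h2⟩ := hcor
    · exfalso; rw [h1] at hcA; linarith [hcA.1]
    · exfalso; rw [h1] at hcA; linarith [hcA.1]
    · exfalso; rw [h2] at hcA; linarith [hcA.2.2.1]
    · exact Prod.ext h1 h2
  · rintro c ⟨hcor, hcA⟩
    rw [corners_rect hx hy] at hcor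
    rw [mem_rect] at hcA
    obtain ⟨h1 | h1, h2 | h2⟩ := hcor
    · exact Prod.ext h1 h2
    · exfalso; rw [h2] at hcA; linarith [hcA.2.2.2]
    · exfalso; rw [h1] at hcA; linarith [hcA.2.1]
    · exfalso; rw [h1] at hcA; linarith [hcA.2.1]

  · rintro c (⟨hcor, hcA⟩ | ⟨hcor, hcA'⟩) hcS
    · have hcA' := corners_sub hx' hy' hcor
      have m1 : c ∈ ({a₁, a₂} : Set Pt) := hA ▸ ⟨hcA, hcS⟩
      have m2 : c ∈ ({a₁', a₂'} : Set Pt) := hA' ▸ ⟨hcA', hcS⟩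
      rcases m1 with rfl | rfl <;> rcases m2 with h | h <;>
        first | exact h11 h | exact h12 h | exact h21 h | exact h22 h
    · have hcA := corners_sub hx hy hcor
      have m1 : c ∈ ({a₁, a₂} : Set Pt) := hA ▸ ⟨hcA, hcS⟩
      have m2 : c ∈ ({a₁', a₂'} : Set Pt) := hA' ▸ ⟨hcA', hcS⟩
      rcases m1 with rfl | rfl <;> rcases m2 with h | h <;>
        first | exact h11 h | exact h12 h | exact h21 h | exact h22 h

lemma main_core {S : Set Pt} {x1 x2 y1 y2 x1' x2' y1' y2' : ℝ} {a₁ a₂ a₁' a₂' : Pt}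
    (hx : x1 ≤ x2) (hy : y1 ≤ y2) (hx' : x1' ≤ x2') (hy' : y1' ≤ y2')
    (ha₁ : a₁ = (x1, y1)) (ha₂ : a₂ = (x2, y2))
    (ha₁' : a₁' = (x1', y1')) (ha₂' : a₂' = (x2', y2'))
    (hA : (Icc x1 x2 ×ˢ Icc y1 y2) ∩ S = {a₁, a₂})
    (hA' : (Icc x1' x2' ×ˢ Icc y1' y2') ∩ S = {a₁', a₂'})
    (h12 : a₁ ≠ a₂') (h21 : a₂ ≠ a₁')
    (hne : (Icc x1 x2 ×ˢ Icc y1 y2 : Set Pt) ≠ Icc x1' x2' ×ˢ Icc y1' y2')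
    (hinter : ((Icc x1 x2 ×ˢ Icc y1 y2) ∩ (Icc x1' x2' ×ˢ Icc y1' y2') : Set Pt).Nonempty) :
    PiercingInter (Icc x1 x2 ×ˢ Icc y1 y2) (Icc x1' x2' ×ˢ Icc y1' y2') ∨
      CornerInter S (Icc x1 x2 ×ˢ Icc y1 y2) (Icc x1' x2' ×ˢ Icc y1' y2') := by
  obtain ⟨c, hc, hc'⟩ := hinter
  rw [mem_rect] at hc hc'
  have oxa : x1 ≤ x2' := hc.1.trans hc'.2.1
  have oxb : x1' ≤ x2 := hc'.1.trans hc.2.1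
  have oya : y1 ≤ y2' := hc.2.2.1.trans hc'.2.2.2
  have oyb : y1' ≤ y2 := hc'.2.2.1.trans hc.2.2.2
  -- memberships of the four points
  have m1 : a₁ ∈ (Icc x1 x2 ×ˢ Icc y1 y2) ∩ S := by rw [hA]; exact Or.inl rfl
  have m2 : a₂ ∈ (Icc x1 x2 ×ˢ Icc y1 y2) ∩ S := by rw [hA]; exact Or.inr rfl
  have m1' : a₁' ∈ (Icc x1' x2' ×ˢ Icc y1' y2') ∩ S := by rw [hA']; exact Or.inl rfl
  have m2' : a₂' ∈ (Icc x1' x2' ×ˢ Icc y1' y2') ∩ S := by rw [hA']; exact Or.inr rfl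
  rcases eq_or_ne a₂ a₂' with he2 | hne2
  · -- shared top-right corner
    rw [ha₂, ha₂', Prod.mk.injEq] at he2
    obtain ⟨hex, hey⟩ := he2
    rcases le_total x1 x1' with h1 | h1 <;> rcases le_total y1 y1' with h2 | h2
    · -- A' ⊆ A : contradiction
      exfalso
      have : a₁' ∈ ({a₁, a₂} : Set Pt) := by
        rw [← hA]
        refine ⟨mem_rect.mpr ?_, m1'.2⟩
        rw [ha₁']
        exact ⟨h1, hx'.trans hex.ge, h2, hy'.trans hey.ge⟩
      simp only [Set.mem_insert_iff, Set.mem_singleton_iff] at this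
      rcases this with h | h
      · rw [ha₁, ha₁', Prod.mk.injEq] at h
        exact hne (by rw [h.1, h.2, hex, hey])
      · exact h21 h.symm
    · exact Or.inl (Or.inr (rect_pierces hx' hy' hx hy h1 hex.ge h2 (le_of_eq hey)))
    · exact Or.inl (Or.inl (rect_pierces hx hy hx' hy' h1 hex.le h2 hey.ge))
    · -- A ⊆ A' : contradiction
      exfalso
      have : a₁ ∈ ({a₁', a₂'} : Set Pt) := by
        rw [← hA']
        refine ⟨mem_rect.mpr ?_, m1.2⟩
        rw [ha₁]
        exact ⟨h1, hx.trans hex.le, h2, hy.trans hey.le⟩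
      simp only [Set.mem_insert_iff, Set.mem_singleton_iff] at this
      rcases this with h | h
      · rw [ha₁, ha₁', Prod.mk.injEq] at h
        exact hne (by rw [h.1, h.2, hex, hey])
      · exact h12 h
  rcases eq_or_ne a₁ a₁' with he1 | hne1
  · -- shared bottom-left corner
    rw [ha₁, ha₁', Prod.mk.injEq] at he1
    obtain ⟨hex, hey⟩ := he1
    rcases le_total x2 x2' with h1 | h1 <;> rcases le_total y2 y2' with h2 | h2
    · -- A ⊆ A' : contradiction
      exfalso
      have : a₂ ∈ ({a₁', a₂'} : Set Pt) := by
        rw [← hA']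
        refine ⟨mem_rect.mpr ?_, m2.2⟩
        rw [ha₂]
        exact ⟨hex.ge.trans hx, h1, hey.ge.trans hy, h2⟩
      simp only [Set.mem_insert_iff, Set.mem_singleton_iff] at this
      rcases this with h | h
      · exact h21 h
      · rw [ha₂, ha₂', Prod.mk.injEq] at h
        exact hne2 (by rw [ha₂, ha₂', h.1, h.2])
    · exact Or.inl (Or.inl (rect_pierces hx hy hx' hy' hex.ge h1 hey.le h2))
    · exact Or.inl (Or.inr (rect_pierces hx' hy' hx hy hex.le h1 hey.ge h2))
    · -- A' ⊆ A : contradiction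
      exfalso
      have : a₂' ∈ ({a₁, a₂} : Set Pt) := by
        rw [← hA]
        refine ⟨mem_rect.mpr ?_, m2'.2⟩
        rw [ha₂']
        exact ⟨hex.le.trans hx', h1, hey.le.trans hy', h2⟩
      simp only [Set.mem_insert_iff, Set.mem_singleton_iff] at this
      rcases this with h | h
      · exact h12 h.symm
      · rw [ha₂, ha₂', Prod.mk.injEq] at h
        exact hne2 (by rw [ha₂, ha₂', h.1, h.2])
  -- now all four corner points are distinct
  have n2' : a₂' ∉ (Icc x1 x2 ×ˢ Icc y1 y2 : Set Pt) := by
    intro h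
    have : a₂' ∈ ({a₁, a₂} : Set Pt) := hA ▸ ⟨h, m2'.2⟩
    simp only [Set.mem_insert_iff, Set.mem_singleton_iff] at this
    rcases this with h' | h'
    · exact h12 h'.symm
    · exact hne2 h'.symm
  have n2 : a₂ ∉ (Icc x1' x2' ×ˢ Icc y1' y2' : Set Pt) := by
    intro h
    have : a₂ ∈ ({a₁', a₂'} : Set Pt) := hA' ▸ ⟨h, m2.2⟩
    simp only [Set.mem_insert_iff, Set.mem_singleton_iff] at this
    rcases this with h' | h'
    · exact h21 h'
    · exact hne2 h'
  have n1' : a₁' ∉ (Icc x1 x2 ×ˢ Icc y1 y2 : Set Pt) := by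
    intro h
    have : a₁' ∈ ({a₁, a₂} : Set Pt) := hA ▸ ⟨h, m1'.2⟩
    simp only [Set.mem_insert_iff, Set.mem_singleton_iff] at this
    rcases this with h' | h'
    · exact hne1 h'.symm
    · exact h21 h'.symm
  have n1 : a₁ ∉ (Icc x1' x2' ×ˢ Icc y1' y2' : Set Pt) := by
    intro h
    have : a₁ ∈ ({a₁', a₂'} : Set Pt) := hA' ▸ ⟨h, m1.2⟩
    simp only [Set.mem_insert_iff, Set.mem_singleton_iff] at this
    rcases this with h' | h'
    · exact hne1 h'
    · exact h12 h'
  rw [ha₂', mem_rect] at n2'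
  rw [ha₂, mem_rect] at n2
  rw [ha₁', mem_rect] at n1'
  rw [ha₁, mem_rect] at n1
  push_neg at n2' n2 n1' n1
  have d2' : x2 < x2' ∨ y2 < y2' := by
    by_contra h; push_neg at h
    exact absurd (n2' oxa h.1 oya) (not_lt.mpr h.2)
  have d2 : x2' < x2 ∨ y2' < y2 := by
    by_contra h; push_neg at h
    exact absurd (n2 oxb h.1 oyb) (not_lt.mpr h.2)
  have d1' : x1' < x1 ∨ y1' < y1 := by
    by_contra h; push_neg at h
    exact absurd (n1' h.1 oxb h.2) (not_lt.mpr oyb)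
  have d1 : x1 < x1' ∨ y1 < y1' := by
    by_contra h; push_neg at h
    exact absurd (n1 h.1 oxa h.2) (not_lt.mpr oya)
  have T : (x2 < x2' ∧ y2' < y2) ∨ (x2' < x2 ∧ y2 < y2') := by
    rcases d2' with h | h <;> rcases d2 with h' | h'
    · exact absurd h' (lt_asymm h)
    · exact Or.inl ⟨h, h'⟩
    · exact Or.inr ⟨h', h⟩
    · exact absurd h' (lt_asymm h)
  have Bo : (x1' < x1 ∧ y1 < y1') ∨ (x1 < x1' ∧ y1' < y1) := by
    rcases d1' with h | h <;> rcases d1 with h' | h'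
    · exact absurd h' (lt_asymm h)
    · exact Or.inl ⟨h, h'⟩
    · exact Or.inr ⟨h', h⟩
    · exact absurd h' (lt_asymm h)
  rcases T with ⟨t1, t2⟩ | ⟨t1, t2⟩ <;> rcases Bo with ⟨b1, b2⟩ | ⟨b1, b2⟩
  · exact Or.inl (Or.inl (rect_pierces hx hy hx' hy' b1.le t1.le b2.le t2.le))
  · exact Or.inr (corner_case hx hy hx' hy' oxb oya b1 t1 b2 t2 hA hA' hne1 h12 h21 hne2)
  · exact Or.inr (cornerInter_symm (corner_case hx' hy' hx hy oxa oyb b1 t1 b2 t2 hA' hA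
      hne1.symm h21.symm h12.symm hne2.symm))
  · exact Or.inl (Or.inr (rect_pierces hx' hy' hx hy b1.le t1.le b2.le t2.le))

lemma anti_core {S : Set Pt} {x1 x2 y1 y2 x1' x2' y1' y2' : ℝ} {a₁ a₂ a₁' a₂' : Pt}
    (hx : x1 ≤ x2) (hy : y1 ≤ y2) (hx' : x1' ≤ x2') (hy' : y1' ≤ y2')
    (ha₁ : a₁ = (x2, y1)) (ha₂ : a₂ = (x1, y2))
    (ha₁' : a₁' = (x2', y1')) (ha₂' : a₂' = (x1', y2'))
    (hA : (Icc x1 x2 ×ˢ Icc y1 y2) ∩ S = {a₁, a₂})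
    (hA' : (Icc x1' x2' ×ˢ Icc y1' y2') ∩ S = {a₁', a₂'})
    (h12 : a₁ ≠ a₂') (h21 : a₂ ≠ a₁')
    (hne : (Icc x1 x2 ×ˢ Icc y1 y2 : Set Pt) ≠ Icc x1' x2' ×ˢ Icc y1' y2')
    (hinter : ((Icc x1 x2 ×ˢ Icc y1 y2) ∩ (Icc x1' x2' ×ˢ Icc y1' y2') : Set Pt).Nonempty) :
    PiercingInter (Icc x1 x2 ×ˢ Icc y1 y2) (Icc x1' x2' ×ˢ Icc y1' y2') ∨
      CornerInter S (Icc x1 x2 ×ˢ Icc y1 y2) (Icc x1' x2' ×ˢ Icc y1' y2') := by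
  obtain ⟨c, hc, hc'⟩ := hinter
  rw [mem_rect] at hc hc'
  have oxa : x1 ≤ x2' := hc.1.trans hc'.2.1
  have oxb : x1' ≤ x2 := hc'.1.trans hc.2.1
  have oya : y1 ≤ y2' := hc.2.2.1.trans hc'.2.2.2
  have oyb : y1' ≤ y2 := hc'.2.2.1.trans hc.2.2.2
  have m1 : a₁ ∈ (Icc x1 x2 ×ˢ Icc y1 y2) ∩ S := by rw [hA]; exact Or.inl rfl
  have m2 : a₂ ∈ (Icc x1 x2 ×ˢ Icc y1 y2) ∩ S := by rw [hA]; exact Or.inr rfl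
  have m1' : a₁' ∈ (Icc x1' x2' ×ˢ Icc y1' y2') ∩ S := by rw [hA']; exact Or.inl rfl
  have m2' : a₂' ∈ (Icc x1' x2' ×ˢ Icc y1' y2') ∩ S := by rw [hA']; exact Or.inr rfl
  rcases eq_or_ne a₂ a₂' with he2 | hne2
  · -- shared top-left corner : x1 = x1', y2 = y2'
    rw [ha₂, ha₂', Prod.mk.injEq] at he2
    obtain ⟨hex, hey⟩ := he2
    rcases le_total x2 x2' with h1 | h1 <;> rcases le_total y1 y1' with h2 | h2
    · exact Or.inl (Or.inl (rect_pierces hx hy hx' hy' hex.ge h1 h2 hey.ge))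
    · -- A ⊆ A' : contradiction
      exfalso
      have : a₁ ∈ ({a₁', a₂'} : Set Pt) := by
        rw [← hA']
        refine ⟨mem_rect.mpr ?_, m1.2⟩
        rw [ha₁]
        exact ⟨hex.ge.trans hx, h1, h2, hy.trans hey.le⟩
      simp only [Set.mem_insert_iff, Set.mem_singleton_iff] at this
      rcases this with h | h
      · rw [ha₁, ha₁', Prod.mk.injEq] at h
        exact hne (by rw [h.1, h.2, hex, hey])
      · exact h12 h
    · -- A' ⊆ A : contradiction
      exfalso
      have : a₁' ∈ ({a₁, a₂} : Set Pt) := by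
        rw [← hA]
        refine ⟨mem_rect.mpr ?_, m1'.2⟩
        rw [ha₁']
        exact ⟨hex.le.trans hx', h1, h2, hy'.trans hey.ge⟩
      simp only [Set.mem_insert_iff, Set.mem_singleton_iff] at this
      rcases this with h | h
      · rw [ha₁, ha₁', Prod.mk.injEq] at h
        exact hne (by rw [← h.1, ← h.2, hex, hey])
      · exact h21 h.symm
    · exact Or.inl (Or.inr (rect_pierces hx' hy' hx hy hex.le h1 h2 hey.le))
  rcases eq_or_ne a₁ a₁' with he1 | hne1
  · -- shared bottom-right corner : x2 = x2', y1 = y1'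
    rw [ha₁, ha₁', Prod.mk.injEq] at he1
    obtain ⟨hex, hey⟩ := he1
    rcases le_total x1 x1' with h1 | h1 <;> rcases le_total y2 y2' with h2 | h2
    · -- A' ⊆ A in x?, cases
      exact Or.inl (Or.inr (rect_pierces hx' hy' hx hy h1 hex.ge hey.ge h2))
    · -- A' ⊆ A : contradiction
      exfalso
      have : a₂' ∈ ({a₁, a₂} : Set Pt) := by
        rw [← hA]
        refine ⟨mem_rect.mpr ?_, m2'.2⟩
        rw [ha₂']
        exact ⟨h1, hx'.trans hex.ge, hey.le.trans hy', h2⟩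
      simp only [Set.mem_insert_iff, Set.mem_singleton_iff] at this
      rcases this with h | h
      · exact h12 h.symm
      · rw [ha₂, ha₂', Prod.mk.injEq] at h
        exact hne2 (by rw [ha₂, ha₂', h.1, h.2])
    · -- A ⊆ A' : contradiction
      exfalso
      have : a₂ ∈ ({a₁', a₂'} : Set Pt) := by
        rw [← hA']
        refine ⟨mem_rect.mpr ?_, m2.2⟩
        rw [ha₂]
        exact ⟨h1, hx.trans hex.le, hey.ge.trans hy, h2⟩
      simp only [Set.mem_insert_iff, Set.mem_singleton_iff] at this
      rcases this with h | h
      · exact h21 h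
      · rw [ha₂, ha₂', Prod.mk.injEq] at h
        exact hne2 (by rw [ha₂, ha₂', h.1, h.2])
    · exact Or.inl (Or.inl (rect_pierces hx hy hx' hy' h1 hex.le hey.le h2))
  -- now all four corner points are distinct
  have n2' : a₂' ∉ (Icc x1 x2 ×ˢ Icc y1 y2 : Set Pt) := by
    intro h
    have : a₂' ∈ ({a₁, a₂} : Set Pt) := hA ▸ ⟨h, m2'.2⟩
    simp only [Set.mem_insert_iff, Set.mem_singleton_iff] at this
    rcases this with h' | h'
    · exact h12 h'.symm
    · exact hne2 h'.symm
  have n2 : a₂ ∉ (Icc x1' x2' ×ˢ Icc y1' y2' : Set Pt) := by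
    intro h
    have : a₂ ∈ ({a₁', a₂'} : Set Pt) := hA' ▸ ⟨h, m2.2⟩
    simp only [Set.mem_insert_iff, Set.mem_singleton_iff] at this
    rcases this with h' | h'
    · exact h21 h'
    · exact hne2 h'
  have n1' : a₁' ∉ (Icc x1 x2 ×ˢ Icc y1 y2 : Set Pt) := by
    intro h
    have : a₁' ∈ ({a₁, a₂} : Set Pt) := hA ▸ ⟨h, m1'.2⟩
    simp only [Set.mem_insert_iff, Set.mem_singleton_iff] at this
    rcases this with h' | h'
    · exact hne1 h'.symm
    · exact h21 h'.symm
  have n1 : a₁ ∉ (Icc x1' x2' ×ˢ Icc y1' y2' : Set Pt) := by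
    intro h
    have : a₁ ∈ ({a₁', a₂'} : Set Pt) := hA' ▸ ⟨h, m1.2⟩
    simp only [Set.mem_insert_iff, Set.mem_singleton_iff] at this
    rcases this with h' | h'
    · exact hne1 h'
    · exact h12 h'
  rw [ha₂', mem_rect] at n2'
  rw [ha₂, mem_rect] at n2
  rw [ha₁', mem_rect] at n1'
  rw [ha₁, mem_rect] at n1
  push_neg at n2' n2 n1' n1
  -- a₂' = (x1', y2') ∉ A, with x1' ≤ x2 and y1 ≤ y2' known
  have d2' : x1' < x1 ∨ y2 < y2' := by
    by_contra h; push_neg at h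
    exact absurd (n2' h.1 oxb oya) (not_lt.mpr h.2)
  -- a₂ = (x1, y2) ∉ A', with x1 ≤ x2' and y1' ≤ y2 known
  have d2 : x1 < x1' ∨ y2' < y2 := by
    by_contra h; push_neg at h
    exact absurd (n2 h.1 oxa oyb) (not_lt.mpr h.2)
  -- a₁' = (x2', y1') ∉ A, with x1 ≤ x2' and y1' ≤ y2 known
  have d1' : x2 < x2' ∨ y1' < y1 := by
    by_contra h; push_neg at h
    exact absurd (n1' oxa h.1 h.2) (not_lt.mpr oyb)
  -- a₁ = (x2, y1) ∉ A', with x1' ≤ x2 and y1 ≤ y2' known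
  have d1 : x2' < x2 ∨ y1 < y1' := by
    by_contra h; push_neg at h
    exact absurd (n1 oxb h.1 h.2) (not_lt.mpr oya)
  have T : (x1' < x1 ∧ y2' < y2) ∨ (x1 < x1' ∧ y2 < y2') := by
    rcases d2' with h | h <;> rcases d2 with h' | h'
    · exact absurd h' (lt_asymm h)
    · exact Or.inl ⟨h, h'⟩
    · exact Or.inr ⟨h', h⟩
    · exact absurd h' (lt_asymm h)
  have Bo : (x2 < x2' ∧ y1 < y1') ∨ (x2' < x2 ∧ y1' < y1) := by
    rcases d1' with h | h <;> rcases d1 with h' | h'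
    · exact absurd h' (lt_asymm h)
    · exact Or.inl ⟨h, h'⟩
    · exact Or.inr ⟨h', h⟩
    · exact absurd h' (lt_asymm h)
  rcases T with ⟨t1, t2⟩ | ⟨t1, t2⟩ <;> rcases Bo with ⟨b1, b2⟩ | ⟨b1, b2⟩
  · exact Or.inl (Or.inl (rect_pierces hx hy hx' hy' t1.le b1.le b2.le t2.le))
  · exact Or.inr (anti_corner_case hx hy hx' hy' oxa oya t1 b1 b2 t2 hA hA' hne1 h12 h21 hne2)
  · exact Or.inr (cornerInter_symm (anti_corner_case hx' hy' hx hy oxb oyb t1 b1 b2 t2 hA' hA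
      hne1.symm h21.symm h12.symm hne2.symm))
  · exact Or.inl (Or.inr (rect_pierces hx' hy' hx hy t1.le b1.le b2.le t2.le))

lemma bl_mem_D (p q : Pt) : ((min p.1 q.1, min p.2 q.2) : Pt) ∈ D p q :=
  mem_rect.mpr ⟨le_rfl, min_le_max, le_rfl, min_le_max⟩

lemma br_mem_D (p q : Pt) : ((max p.1 q.1, min p.2 q.2) : Pt) ∈ D p q :=
  mem_rect.mpr ⟨min_le_max, le_rfl, le_rfl, min_le_max⟩

lemma not_mem_RB {R B : Set Pt} (hdisj : R ∩ B = ∅) {x : Pt} (hx : x ∈ R) (hx' : x ∈ B) :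
    False := by
  have : x ∈ R ∩ B := ⟨hx, hx'⟩
  rw [hdisj] at this
  exact this

lemma biFam1_core {R B : Set Pt} (hdisj : R ∩ B = ∅) {A : Set Pt} (hA : A ∈ biFam1 R B) :
    ∃ p q : Pt, p ∈ R ∧ q ∈ B ∧ q.1 ≤ p.1 ∧ q.2 ≤ p.2 ∧
      A = Icc q.1 p.1 ×ˢ Icc q.2 p.2 ∧ A ∩ (R ∪ B) = {q, p} := by
  obtain ⟨p, hp, q, hq, hDpq, hAS, hbl⟩ := hA
  have hblm : ((min p.1 q.1, min p.2 q.2) : Pt) ∈ ({p, q} : Set Pt) := by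
    rw [← hAS]
    exact ⟨hDpq ▸ bl_mem_D p q, Or.inr hbl⟩
  simp only [Set.mem_insert_iff, Set.mem_singleton_iff] at hblm
  rcases hblm with h | h
  · exact absurd (h ▸ hbl) (fun h' => not_mem_RB hdisj hp h')
  · rw [Prod.mk.injEq] at h
    have h1 : q.1 ≤ p.1 := h.1 ▸ min_le_left p.1 q.1
    have h2 : q.2 ≤ p.2 := h.2 ▸ min_le_left p.2 q.2
    refine ⟨p, q, hp, hq, h1, h2, ?_, by rw [hAS, Set.pair_comm]⟩
    rw [hDpq]
    unfold D
    rw [min_comm p.1 q.1, min_eq_left h1, max_eq_left h1,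
        min_comm p.2 q.2, min_eq_left h2, max_eq_left h2]

lemma biFam2_core {R B : Set Pt} (hdisj : R ∩ B = ∅) {A : Set Pt} (hA : A ∈ biFam2 R B) :
    ∃ p q : Pt, p ∈ R ∧ q ∈ B ∧ p.1 ≤ q.1 ∧ p.2 ≤ q.2 ∧
      A = Icc p.1 q.1 ×ˢ Icc p.2 q.2 ∧ A ∩ (R ∪ B) = {p, q} := by
  obtain ⟨p, hp, q, hq, hDpq, hAS, hbl⟩ := hA
  have hblm : ((min p.1 q.1, min p.2 q.2) : Pt) ∈ ({p, q} : Set Pt) := by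
    rw [← hAS]
    exact ⟨hDpq ▸ bl_mem_D p q, Or.inl hbl⟩
  simp only [Set.mem_insert_iff, Set.mem_singleton_iff] at hblm
  rcases hblm with h | h
  · rw [Prod.mk.injEq] at h
    have h1 : p.1 ≤ q.1 := h.1 ▸ min_le_right p.1 q.1
    have h2 : p.2 ≤ q.2 := h.2 ▸ min_le_right p.2 q.2
    refine ⟨p, q, hp, hq, h1, h2, ?_, hAS⟩
    rw [hDpq]
    unfold D
    rw [min_eq_left h1, max_eq_right h1, min_eq_left h2, max_eq_right h2]
  · exact absurd (h ▸ hbl) (fun h' => not_mem_RB hdisj h' hq)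

lemma biFam3_core {R B : Set Pt} (hdisj : R ∩ B = ∅) {A : Set Pt} (hA : A ∈ biFam3 R B) :
    ∃ p q : Pt, p ∈ R ∧ q ∈ B ∧ p.1 ≤ q.1 ∧ q.2 ≤ p.2 ∧
      A = Icc p.1 q.1 ×ˢ Icc q.2 p.2 ∧ A ∩ (R ∪ B) = {q, p} := by
  obtain ⟨p, hp, q, hq, hDpq, hAS, hbr⟩ := hA
  have hbrm : ((max p.1 q.1, min p.2 q.2) : Pt) ∈ ({p, q} : Set Pt) := by
    rw [← hAS]
    exact ⟨hDpq ▸ br_mem_D p q, Or.inr hbr⟩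
  simp only [Set.mem_insert_iff, Set.mem_singleton_iff] at hbrm
  rcases hbrm with h | h
  · exact absurd (h ▸ hbr) (fun h' => not_mem_RB hdisj hp h')
  · rw [Prod.mk.injEq] at h
    have h1 : p.1 ≤ q.1 := h.1 ▸ le_max_left p.1 q.1
    have h2 : q.2 ≤ p.2 := h.2 ▸ min_le_left p.2 q.2
    refine ⟨p, q, hp, hq, h1, h2, ?_, by rw [hAS, Set.pair_comm]⟩
    rw [hDpq]
    unfold D
    rw [min_eq_left h1, max_eq_right h1,
        min_comm p.2 q.2, min_eq_left h2, max_eq_left h2]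

lemma biFam4_core {R B : Set Pt} (hdisj : R ∩ B = ∅) {A : Set Pt} (hA : A ∈ biFam4 R B) :
    ∃ p q : Pt, p ∈ R ∧ q ∈ B ∧ q.1 ≤ p.1 ∧ p.2 ≤ q.2 ∧
      A = Icc q.1 p.1 ×ˢ Icc p.2 q.2 ∧ A ∩ (R ∪ B) = {p, q} := by
  obtain ⟨p, hp, q, hq, hDpq, hAS, hbr⟩ := hA
  have hbrm : ((max p.1 q.1, min p.2 q.2) : Pt) ∈ ({p, q} : Set Pt) := by
    rw [← hAS]
    exact ⟨hDpq ▸ br_mem_D p q, Or.inl hbr⟩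
  simp only [Set.mem_insert_iff, Set.mem_singleton_iff] at hbrm
  rcases hbrm with h | h
  · rw [Prod.mk.injEq] at h
    have h1 : q.1 ≤ p.1 := h.1 ▸ le_max_right p.1 q.1
    have h2 : p.2 ≤ q.2 := h.2 ▸ min_le_right p.2 q.2
    refine ⟨p, q, hp, hq, h1, h2, ?_, hAS⟩
    rw [hDpq]
    unfold D
    rw [min_comm p.1 q.1, min_eq_left h1, max_eq_left h1,
        min_eq_left h2, max_eq_right h2]
  · exact absurd (h ▸ hbr) (fun h' => not_mem_RB hdisj h' hq)

/-- In each of the families `𝓡̄₁, 𝓡̄₂, 𝓡̄₃, 𝓡̄₄`, two distinct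
intersecting rectangles always have a piercing or a corner intersection. -/
theorem stmt11 (R B : Set Pt) (hfin : (R ∪ B).Finite) (hdisj : R ∩ B = ∅) :
    ∀ F ∈ [biFam1 R B, biFam2 R B, biFam3 R B, biFam4 R B],
      ∀ A ∈ F, ∀ A' ∈ F, A ≠ A' → (A ∩ A').Nonempty →
        PiercingInter A A' ∨ CornerInter (R ∪ B) A A' := by
  have hRB : ∀ x ∈ R, ∀ y ∈ B, x ≠ y := fun x hx y hy hxy =>
    (not_mem_RB hdisj hx (hxy ▸ hy)).elim
  intro F hF
  simp only [List.mem_cons, List.not_mem_nil, or_false] at hF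
  rcases hF with rfl | rfl | rfl | rfl
  · intro A hA A' hA' hne hint
    obtain ⟨p, q, hp, hq, h1, h2, hAeq, hAS⟩ := biFam1_core hdisj hA
    obtain ⟨p', q', hp', hq', h1', h2', hAeq', hAS'⟩ := biFam1_core hdisj hA'
    subst hAeq; subst hAeq'
    exact main_core h1 h2 h1' h2' rfl rfl rfl rfl hAS hAS'
      ((hRB p' hp' q hq).symm) (hRB p hp q' hq') hne hint
  · intro A hA A' hA' hne hint
    obtain ⟨p, q, hp, hq, h1, h2, hAeq, hAS⟩ := biFam2_core hdisj hA
    obtain ⟨p', q', hp', hq', h1', h2', hAeq', hAS'⟩ := biFam2_core hdisj hA'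
    subst hAeq; subst hAeq'
    exact main_core h1 h2 h1' h2' rfl rfl rfl rfl hAS hAS'
      (hRB p hp q' hq') ((hRB p' hp' q hq).symm) hne hint
  · intro A hA A' hA' hne hint
    obtain ⟨p, q, hp, hq, h1, h2, hAeq, hAS⟩ := biFam3_core hdisj hA
    obtain ⟨p', q', hp', hq', h1', h2', hAeq', hAS'⟩ := biFam3_core hdisj hA'
    subst hAeq; subst hAeq'
    exact anti_core h1 h2 h1' h2' rfl rfl rfl rfl hAS hAS'
      ((hRB p' hp' q hq).symm) (hRB p hp q' hq') hne hint
  · intro A hA A' hA' hne hint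
    obtain ⟨p, q, hp, hq, h1, h2, hAeq, hAS⟩ := biFam4_core hdisj hA
    obtain ⟨p', q', hp', hq', h1', h2', hAeq', hAS'⟩ := biFam4_core hdisj hA'
    subst hAeq; subst hAeq'
    exact anti_core h1 h2 h1' h2' rfl rfl rfl rfl hAS hAS'
      (hRB p hp q' hq') ((hRB p' hp' q hq).symm) hne hint
end

section
/- Let M₁ = {(0,0),(5,0),(5,5),(0,5)} and M₂ = {(1,3),(2,2),(2,3),(2,4),(3,1),(3,2),(3,3),(4,2)} be point sets in ℝ². For every proper subset M₁' ⊊ M₁, the point set M₁' ∪ M₂ does not admit any perfect strong matching with rectangles. -/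
open Set

/-- `M` is a strong matching of the point set `P` with rectangles: a family of
pairwise-disjoint rectangles, each of the form `D p q` with `p, q` distinct
points of `P`, containing no point of `P` other than `p` and `q`. -/
def IsStrongMatching (P : Set Pt) (M : Set (Set Pt)) : Prop :=
  (∀ A ∈ M, ∃ p q, p ∈ P ∧ q ∈ P ∧ p ≠ q ∧ A = D p q ∧ A ∩ P = {p, q}) ∧
  M.Pairwise fun A B => A ∩ B = ∅

/-- A strong matching is perfect if every point of `P` lies in some rectangle. -/
def IsPerfectStrongMatching (P : Set Pt) (M : Set (Set Pt)) : Prop :=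
  IsStrongMatching P M ∧ ∀ p ∈ P, ∃ A ∈ M, p ∈ A

/-- The point set `M₁`. -/
def M1 : Set Pt := {(0, 0), (5, 0), (5, 5), (0, 5)}

/-- The point set `M₂`. -/
def M2 : Set Pt := {(1, 3), (2, 2), (2, 3), (2, 4), (3, 1), (3, 2), (3, 3), (4, 2)}

lemma mem_D {a b r : Pt} :
    r ∈ D a b ↔ (min a.1 b.1 ≤ r.1 ∧ r.1 ≤ max a.1 b.1) ∧
      (min a.2 b.2 ≤ r.2 ∧ r.2 ≤ max a.2 b.2) := by
  rw [D, Set.mem_prod, Set.mem_Icc, Set.mem_Icc]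

lemma D_comm (a b : Pt) : D a b = D b a := by
  simp [D, min_comm, max_comm]

lemma mem_D_right (a b : Pt) : b ∈ D a b := by
  rw [mem_D]
  exact ⟨⟨min_le_right _ _, le_max_right _ _⟩, min_le_right _ _, le_max_right _ _⟩

lemma allowed_aux {P : Set Pt} (h2 : M2 ⊆ P) (p q : Pt)
    (hA : D p q ∩ P = {p, q}) :
    ∀ r, r ∈ M2 → r ∈ D p q → r ≠ p → r ≠ q → False := by
  intro r h1 hD hp hq
  have hr : r ∈ ({p, q} : Set Pt) := hA ▸ Set.mem_inter hD (h2 h1)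
  rcases Set.mem_insert_iff.mp hr with h | h
  · exact hp h
  · exact hq (Set.mem_singleton_iff.mp h)

lemma allowed13 {P : Set Pt} (h2 : M2 ⊆ P) (hP : P ⊆ M1 ∪ M2) {q : Pt}
    (hq : q ∈ P) (hne : q ≠ ((1:ℝ),(3:ℝ))) (hA : D ((1:ℝ),(3:ℝ)) q ∩ P = {((1:ℝ),(3:ℝ)), q}) :
    q = (2,3) ∨ q = (0,0) ∨ q = (0,5) := by
  have w := allowed_aux h2 ((1:ℝ),(3:ℝ)) q hA
  have hq' := hP hq
  simp only [M1, M2, Set.mem_union, Set.mem_insert_iff, Set.mem_singleton_iff] at hq'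
  rcases hq' with (rfl|rfl|rfl|rfl)|(rfl|rfl|rfl|rfl|rfl|rfl|rfl|rfl) <;>
  (first
    | exact Or.inl rfl
    | exact Or.inr (Or.inl rfl)
    | exact Or.inr (Or.inr rfl)
    | exact (hne rfl).elim
    | (refine (w ((1,3)) ?_ ?_ ?_ ?_).elim <;>
        first
          | (simp [M2]; done)
          | (rw [mem_D]; norm_num [min_def, max_def]; done)
          | (norm_num [Prod.ext_iff]; done))
    | (refine (w ((2,2)) ?_ ?_ ?_ ?_).elim <;>
        first
          | (simp [M2]; done)
          | (rw [mem_D]; norm_num [min_def, max_def]; done)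
          | (norm_num [Prod.ext_iff]; done))
    | (refine (w ((2,3)) ?_ ?_ ?_ ?_).elim <;>
        first
          | (simp [M2]; done)
          | (rw [mem_D]; norm_num [min_def, max_def]; done)
          | (norm_num [Prod.ext_iff]; done))
    | (refine (w ((2,4)) ?_ ?_ ?_ ?_).elim <;>
        first
          | (simp [M2]; done)
          | (rw [mem_D]; norm_num [min_def, max_def]; done)
          | (norm_num [Prod.ext_iff]; done))
    | (refine (w ((3,1)) ?_ ?_ ?_ ?_).elim <;>
        first
          | (simp [M2]; done)
          | (rw [mem_D]; norm_num [min_def, max_def]; done)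
          | (norm_num [Prod.ext_iff]; done))
    | (refine (w ((3,2)) ?_ ?_ ?_ ?_).elim <;>
        first
          | (simp [M2]; done)
          | (rw [mem_D]; norm_num [min_def, max_def]; done)
          | (norm_num [Prod.ext_iff]; done))
    | (refine (w ((3,3)) ?_ ?_ ?_ ?_).elim <;>
        first
          | (simp [M2]; done)
          | (rw [mem_D]; norm_num [min_def, max_def]; done)
          | (norm_num [Prod.ext_iff]; done))
    | (refine (w ((4,2)) ?_ ?_ ?_ ?_).elim <;>
        first
          | (simp [M2]; done)
          | (rw [mem_D]; norm_num [min_def, max_def]; done)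
          | (norm_num [Prod.ext_iff]; done)))

lemma allowed24 {P : Set Pt} (h2 : M2 ⊆ P) (hP : P ⊆ M1 ∪ M2) {q : Pt}
    (hq : q ∈ P) (hne : q ≠ ((2:ℝ),(4:ℝ))) (hA : D ((2:ℝ),(4:ℝ)) q ∩ P = {((2:ℝ),(4:ℝ)), q}) :
    q = (2,3) ∨ q = (0,5) ∨ q = (5,5) := by
  have w := allowed_aux h2 ((2:ℝ),(4:ℝ)) q hA
  have hq' := hP hq
  simp only [M1, M2, Set.mem_union, Set.mem_insert_iff, Set.mem_singleton_iff] at hq'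
  rcases hq' with (rfl|rfl|rfl|rfl)|(rfl|rfl|rfl|rfl|rfl|rfl|rfl|rfl) <;>
  (first
    | exact Or.inl rfl
    | exact Or.inr (Or.inl rfl)
    | exact Or.inr (Or.inr rfl)
    | exact (hne rfl).elim
    | (refine (w ((1,3)) ?_ ?_ ?_ ?_).elim <;>
        first
          | (simp [M2]; done)
          | (rw [mem_D]; norm_num [min_def, max_def]; done)
          | (norm_num [Prod.ext_iff]; done))
    | (refine (w ((2,2)) ?_ ?_ ?_ ?_).elim <;>
        first
          | (simp [M2]; done)
          | (rw [mem_D]; norm_num [min_def, max_def]; done)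
          | (norm_num [Prod.ext_iff]; done))
    | (refine (w ((2,3)) ?_ ?_ ?_ ?_).elim <;>
        first
          | (simp [M2]; done)
          | (rw [mem_D]; norm_num [min_def, max_def]; done)
          | (norm_num [Prod.ext_iff]; done))
    | (refine (w ((2,4)) ?_ ?_ ?_ ?_).elim <;>
        first
          | (simp [M2]; done)
          | (rw [mem_D]; norm_num [min_def, max_def]; done)
          | (norm_num [Prod.ext_iff]; done))
    | (refine (w ((3,1)) ?_ ?_ ?_ ?_).elim <;>
        first
          | (simp [M2]; done)
          | (rw [mem_D]; norm_num [min_def, max_def]; done)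
          | (norm_num [Prod.ext_iff]; done))
    | (refine (w ((3,2)) ?_ ?_ ?_ ?_).elim <;>
        first
          | (simp [M2]; done)
          | (rw [mem_D]; norm_num [min_def, max_def]; done)
          | (norm_num [Prod.ext_iff]; done))
    | (refine (w ((3,3)) ?_ ?_ ?_ ?_).elim <;>
        first
          | (simp [M2]; done)
          | (rw [mem_D]; norm_num [min_def, max_def]; done)
          | (norm_num [Prod.ext_iff]; done))
    | (refine (w ((4,2)) ?_ ?_ ?_ ?_).elim <;>
        first
          | (simp [M2]; done)
          | (rw [mem_D]; norm_num [min_def, max_def]; done)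
          | (norm_num [Prod.ext_iff]; done)))

lemma allowed31 {P : Set Pt} (h2 : M2 ⊆ P) (hP : P ⊆ M1 ∪ M2) {q : Pt}
    (hq : q ∈ P) (hne : q ≠ ((3:ℝ),(1:ℝ))) (hA : D ((3:ℝ),(1:ℝ)) q ∩ P = {((3:ℝ),(1:ℝ)), q}) :
    q = (3,2) ∨ q = (0,0) ∨ q = (5,0) := by
  have w := allowed_aux h2 ((3:ℝ),(1:ℝ)) q hA
  have hq' := hP hq
  simp only [M1, M2, Set.mem_union, Set.mem_insert_iff, Set.mem_singleton_iff] at hq'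
  rcases hq' with (rfl|rfl|rfl|rfl)|(rfl|rfl|rfl|rfl|rfl|rfl|rfl|rfl) <;>
  (first
    | exact Or.inl rfl
    | exact Or.inr (Or.inl rfl)
    | exact Or.inr (Or.inr rfl)
    | exact (hne rfl).elim
    | (refine (w ((1,3)) ?_ ?_ ?_ ?_).elim <;>
        first
          | (simp [M2]; done)
          | (rw [mem_D]; norm_num [min_def, max_def]; done)
          | (norm_num [Prod.ext_iff]; done))
    | (refine (w ((2,2)) ?_ ?_ ?_ ?_).elim <;>
        first
          | (simp [M2]; done)
          | (rw [mem_D]; norm_num [min_def, max_def]; done)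
          | (norm_num [Prod.ext_iff]; done))
    | (refine (w ((2,3)) ?_ ?_ ?_ ?_).elim <;>
        first
          | (simp [M2]; done)
          | (rw [mem_D]; norm_num [min_def, max_def]; done)
          | (norm_num [Prod.ext_iff]; done))
    | (refine (w ((2,4)) ?_ ?_ ?_ ?_).elim <;>
        first
          | (simp [M2]; done)
          | (rw [mem_D]; norm_num [min_def, max_def]; done)
          | (norm_num [Prod.ext_iff]; done))
    | (refine (w ((3,1)) ?_ ?_ ?_ ?_).elim <;>
        first
          | (simp [M2]; done)
          | (rw [mem_D]; norm_num [min_def, max_def]; done)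
          | (norm_num [Prod.ext_iff]; done))
    | (refine (w ((3,2)) ?_ ?_ ?_ ?_).elim <;>
        first
          | (simp [M2]; done)
          | (rw [mem_D]; norm_num [min_def, max_def]; done)
          | (norm_num [Prod.ext_iff]; done))
    | (refine (w ((3,3)) ?_ ?_ ?_ ?_).elim <;>
        first
          | (simp [M2]; done)
          | (rw [mem_D]; norm_num [min_def, max_def]; done)
          | (norm_num [Prod.ext_iff]; done))
    | (refine (w ((4,2)) ?_ ?_ ?_ ?_).elim <;>
        first
          | (simp [M2]; done)
          | (rw [mem_D]; norm_num [min_def, max_def]; done)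
          | (norm_num [Prod.ext_iff]; done)))

lemma allowed42 {P : Set Pt} (h2 : M2 ⊆ P) (hP : P ⊆ M1 ∪ M2) {q : Pt}
    (hq : q ∈ P) (hne : q ≠ ((4:ℝ),(2:ℝ))) (hA : D ((4:ℝ),(2:ℝ)) q ∩ P = {((4:ℝ),(2:ℝ)), q}) :
    q = (3,2) ∨ q = (5,0) ∨ q = (5,5) := by
  have w := allowed_aux h2 ((4:ℝ),(2:ℝ)) q hA
  have hq' := hP hq
  simp only [M1, M2, Set.mem_union, Set.mem_insert_iff, Set.mem_singleton_iff] at hq'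
  rcases hq' with (rfl|rfl|rfl|rfl)|(rfl|rfl|rfl|rfl|rfl|rfl|rfl|rfl) <;>
  (first
    | exact Or.inl rfl
    | exact Or.inr (Or.inl rfl)
    | exact Or.inr (Or.inr rfl)
    | exact (hne rfl).elim
    | (refine (w ((1,3)) ?_ ?_ ?_ ?_).elim <;>
        first
          | (simp [M2]; done)
          | (rw [mem_D]; norm_num [min_def, max_def]; done)
          | (norm_num [Prod.ext_iff]; done))
    | (refine (w ((2,2)) ?_ ?_ ?_ ?_).elim <;>
        first
          | (simp [M2]; done)
          | (rw [mem_D]; norm_num [min_def, max_def]; done)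
          | (norm_num [Prod.ext_iff]; done))
    | (refine (w ((2,3)) ?_ ?_ ?_ ?_).elim <;>
        first
          | (simp [M2]; done)
          | (rw [mem_D]; norm_num [min_def, max_def]; done)
          | (norm_num [Prod.ext_iff]; done))
    | (refine (w ((2,4)) ?_ ?_ ?_ ?_).elim <;>
        first
          | (simp [M2]; done)
          | (rw [mem_D]; norm_num [min_def, max_def]; done)
          | (norm_num [Prod.ext_iff]; done))
    | (refine (w ((3,1)) ?_ ?_ ?_ ?_).elim <;>
        first
          | (simp [M2]; done)
          | (rw [mem_D]; norm_num [min_def, max_def]; done)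
          | (norm_num [Prod.ext_iff]; done))
    | (refine (w ((3,2)) ?_ ?_ ?_ ?_).elim <;>
        first
          | (simp [M2]; done)
          | (rw [mem_D]; norm_num [min_def, max_def]; done)
          | (norm_num [Prod.ext_iff]; done))
    | (refine (w ((3,3)) ?_ ?_ ?_ ?_).elim <;>
        first
          | (simp [M2]; done)
          | (rw [mem_D]; norm_num [min_def, max_def]; done)
          | (norm_num [Prod.ext_iff]; done))
    | (refine (w ((4,2)) ?_ ?_ ?_ ?_).elim <;>
        first
          | (simp [M2]; done)
          | (rw [mem_D]; norm_num [min_def, max_def]; done)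
          | (norm_num [Prod.ext_iff]; done)))

lemma allowed22 {P : Set Pt} (h2 : M2 ⊆ P) (hP : P ⊆ M1 ∪ M2) {q : Pt}
    (hq : q ∈ P) (hne : q ≠ ((2:ℝ),(2:ℝ))) (hA : D ((2:ℝ),(2:ℝ)) q ∩ P = {((2:ℝ),(2:ℝ)), q}) :
    q = (2,3) ∨ q = (3,2) ∨ q = (0,0) := by
  have w := allowed_aux h2 ((2:ℝ),(2:ℝ)) q hA
  have hq' := hP hq
  simp only [M1, M2, Set.mem_union, Set.mem_insert_iff, Set.mem_singleton_iff] at hq'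
  rcases hq' with (rfl|rfl|rfl|rfl)|(rfl|rfl|rfl|rfl|rfl|rfl|rfl|rfl) <;>
  (first
    | exact Or.inl rfl
    | exact Or.inr (Or.inl rfl)
    | exact Or.inr (Or.inr rfl)
    | exact (hne rfl).elim
    | (refine (w ((1,3)) ?_ ?_ ?_ ?_).elim <;>
        first
          | (simp [M2]; done)
          | (rw [mem_D]; norm_num [min_def, max_def]; done)
          | (norm_num [Prod.ext_iff]; done))
    | (refine (w ((2,2)) ?_ ?_ ?_ ?_).elim <;>
        first
          | (simp [M2]; done)
          | (rw [mem_D]; norm_num [min_def, max_def]; done)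
          | (norm_num [Prod.ext_iff]; done))
    | (refine (w ((2,3)) ?_ ?_ ?_ ?_).elim <;>
        first
          | (simp [M2]; done)
          | (rw [mem_D]; norm_num [min_def, max_def]; done)
          | (norm_num [Prod.ext_iff]; done))
    | (refine (w ((2,4)) ?_ ?_ ?_ ?_).elim <;>
        first
          | (simp [M2]; done)
          | (rw [mem_D]; norm_num [min_def, max_def]; done)
          | (norm_num [Prod.ext_iff]; done))
    | (refine (w ((3,1)) ?_ ?_ ?_ ?_).elim <;>
        first
          | (simp [M2]; done)
          | (rw [mem_D]; norm_num [min_def, max_def]; done)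
          | (norm_num [Prod.ext_iff]; done))
    | (refine (w ((3,2)) ?_ ?_ ?_ ?_).elim <;>
        first
          | (simp [M2]; done)
          | (rw [mem_D]; norm_num [min_def, max_def]; done)
          | (norm_num [Prod.ext_iff]; done))
    | (refine (w ((3,3)) ?_ ?_ ?_ ?_).elim <;>
        first
          | (simp [M2]; done)
          | (rw [mem_D]; norm_num [min_def, max_def]; done)
          | (norm_num [Prod.ext_iff]; done))
    | (refine (w ((4,2)) ?_ ?_ ?_ ?_).elim <;>
        first
          | (simp [M2]; done)
          | (rw [mem_D]; norm_num [min_def, max_def]; done)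
          | (norm_num [Prod.ext_iff]; done)))

lemma allowed33 {P : Set Pt} (h2 : M2 ⊆ P) (hP : P ⊆ M1 ∪ M2) {q : Pt}
    (hq : q ∈ P) (hne : q ≠ ((3:ℝ),(3:ℝ))) (hA : D ((3:ℝ),(3:ℝ)) q ∩ P = {((3:ℝ),(3:ℝ)), q}) :
    q = (2,3) ∨ q = (3,2) ∨ q = (5,5) := by
  have w := allowed_aux h2 ((3:ℝ),(3:ℝ)) q hA
  have hq' := hP hq
  simp only [M1, M2, Set.mem_union, Set.mem_insert_iff, Set.mem_singleton_iff] at hq'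
  rcases hq' with (rfl|rfl|rfl|rfl)|(rfl|rfl|rfl|rfl|rfl|rfl|rfl|rfl) <;>
  (first
    | exact Or.inl rfl
    | exact Or.inr (Or.inl rfl)
    | exact Or.inr (Or.inr rfl)
    | exact (hne rfl).elim
    | (refine (w ((1,3)) ?_ ?_ ?_ ?_).elim <;>
        first
          | (simp [M2]; done)
          | (rw [mem_D]; norm_num [min_def, max_def]; done)
          | (norm_num [Prod.ext_iff]; done))
    | (refine (w ((2,2)) ?_ ?_ ?_ ?_).elim <;>
        first
          | (simp [M2]; done)
          | (rw [mem_D]; norm_num [min_def, max_def]; done)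
          | (norm_num [Prod.ext_iff]; done))
    | (refine (w ((2,3)) ?_ ?_ ?_ ?_).elim <;>
        first
          | (simp [M2]; done)
          | (rw [mem_D]; norm_num [min_def, max_def]; done)
          | (norm_num [Prod.ext_iff]; done))
    | (refine (w ((2,4)) ?_ ?_ ?_ ?_).elim <;>
        first
          | (simp [M2]; done)
          | (rw [mem_D]; norm_num [min_def, max_def]; done)
          | (norm_num [Prod.ext_iff]; done))
    | (refine (w ((3,1)) ?_ ?_ ?_ ?_).elim <;>
        first
          | (simp [M2]; done)
          | (rw [mem_D]; norm_num [min_def, max_def]; done)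
          | (norm_num [Prod.ext_iff]; done))
    | (refine (w ((3,2)) ?_ ?_ ?_ ?_).elim <;>
        first
          | (simp [M2]; done)
          | (rw [mem_D]; norm_num [min_def, max_def]; done)
          | (norm_num [Prod.ext_iff]; done))
    | (refine (w ((3,3)) ?_ ?_ ?_ ?_).elim <;>
        first
          | (simp [M2]; done)
          | (rw [mem_D]; norm_num [min_def, max_def]; done)
          | (norm_num [Prod.ext_iff]; done))
    | (refine (w ((4,2)) ?_ ?_ ?_ ?_).elim <;>
        first
          | (simp [M2]; done)
          | (rw [mem_D]; norm_num [min_def, max_def]; done)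
          | (norm_num [Prod.ext_iff]; done)))

lemma card_big : ({(2,3),(3,2),(0,0),(5,0),(5,5),(0,5)} : Finset Pt).card ≤ 6 := by
  apply le_trans (Finset.card_insert_le _ _); apply Nat.succ_le_succ
  apply le_trans (Finset.card_insert_le _ _); apply Nat.succ_le_succ
  apply le_trans (Finset.card_insert_le _ _); apply Nat.succ_le_succ
  apply le_trans (Finset.card_insert_le _ _); apply Nat.succ_le_succ
  apply le_trans (Finset.card_insert_le _ _); apply Nat.succ_le_succ
  simp

lemma pigeon (T : Finset Pt) (hT : T.card ≤ 5) {q1 q2 q3 q4 q5 q6 : Pt}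
    (m1 : q1 ∈ T) (m2 : q2 ∈ T) (m3 : q3 ∈ T) (m4 : q4 ∈ T) (m5 : q5 ∈ T) (m6 : q6 ∈ T)
    (d12 : q1 ≠ q2) (d13 : q1 ≠ q3) (d14 : q1 ≠ q4) (d15 : q1 ≠ q5) (d16 : q1 ≠ q6)
    (d23 : q2 ≠ q3) (d24 : q2 ≠ q4) (d25 : q2 ≠ q5) (d26 : q2 ≠ q6)
    (d34 : q3 ≠ q4) (d35 : q3 ≠ q5) (d36 : q3 ≠ q6)
    (d45 : q4 ≠ q5) (d46 : q4 ≠ q6) (d56 : q5 ≠ q6) : False := by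
  classical
  have hsub : ({q1,q2,q3,q4,q5,q6} : Finset Pt) ⊆ T := by
    simp [Finset.insert_subset_iff, m1, m2, m3, m4, m5, m6]
  have hcard : ({q1,q2,q3,q4,q5,q6} : Finset Pt).card = 6 := by
    rw [Finset.card_insert_of_notMem (by simp [d12,d13,d14,d15,d16]),
        Finset.card_insert_of_notMem (by simp [d23,d24,d25,d26]),
        Finset.card_insert_of_notMem (by simp [d34,d35,d36]),
        Finset.card_insert_of_notMem (by simp [d45,d46]),
        Finset.card_insert_of_notMem (by simp [d56]),
        Finset.card_singleton]
  have := Finset.card_le_card hsub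
  omega

/-- For every proper subset `M₁' ⊊ M₁`, the point set
`M₁' ∪ M₂` does not admit any perfect strong matching with rectangles. -/
theorem stmt19 (M1' : Set Pt) (hss : M1' ⊂ M1) :
    ¬ ∃ M : Set (Set Pt), IsPerfectStrongMatching (M1' ∪ M2) M := by
  rintro ⟨M, ⟨⟨hmem, hdisj⟩, hperf⟩⟩
  set P := M1' ∪ M2 with hPdef
  have h2sub : M2 ⊆ P := Set.subset_union_right
  have hPsub : P ⊆ M1 ∪ M2 := Set.union_subset_union hss.subset (subset_refl _)
  obtain ⟨c, hcM1, hcnot⟩ : ∃ c ∈ M1, c ∉ M1' := Set.not_subset.mp hss.2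
  simp only [M1, Set.mem_insert_iff, Set.mem_singleton_iff] at hcM1
  have hcM2 : c ∉ M2 := by
    rcases hcM1 with rfl|rfl|rfl|rfl <;> norm_num [M2, Prod.ext_iff]
  have hcP : c ∉ P := fun h => h.elim (fun h1 => hcnot h1) (fun h2 => hcM2 h2)
  have partner : ∀ p ∈ P, ∃ q A, A ∈ M ∧ q ∈ P ∧ q ≠ p ∧ A = D p q ∧ A ∩ P = {p, q} := by
    intro p hp
    obtain ⟨A, hAM, hpA⟩ := hperf p hp
    obtain ⟨a, b, haP, hbP, hab, hAD, hAcap⟩ := hmem A hAM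
    have hp2 : p ∈ ({a, b} : Set Pt) := hAcap ▸ Set.mem_inter hpA hp
    rcases Set.mem_insert_iff.mp hp2 with rfl | h
    · exact ⟨b, A, hAM, hbP, fun h => hab h.symm, hAD, hAcap⟩
    · rcases Set.mem_singleton_iff.mp h with rfl
      exact ⟨a, A, hAM, haP, fun h => hab h, by rw [hAD, D_comm], by rw [hAcap]; exact Set.pair_comm a p⟩
  have inj : ∀ {p p' q : Pt} {A A' : Set Pt}, A ∈ M → A' ∈ M → A = D p q → A' = D p' q →
      A ∩ P = {p, q} → A' ∩ P = {p', q} → q ≠ p → p = p' := by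
    intro p p' q A A' hA hA' hD hD' hcap hcap' hqp
    have hqA : q ∈ A := hD ▸ mem_D_right p q
    have hqA' : q ∈ A' := hD' ▸ mem_D_right p' q
    have hAA' : A = A' := by
      by_contra hne
      have h0 := hdisj hA hA' hne
      have : q ∈ A ∩ A' := ⟨hqA, hqA'⟩
      rw [h0] at this
      exact this
    have hp : p ∈ A' ∩ P := by
      rw [← hAA', hcap]; exact Set.mem_insert _ _
    rw [hcap'] at hp
    rcases Set.mem_insert_iff.mp hp with h | h
    · exact h
    · exact absurd (Set.mem_singleton_iff.mp h).symm hqp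
  obtain ⟨q1, A1, hA1M, hq1P, hq1ne, hA1D, hA1cap⟩ := partner ((1:ℝ),(3:ℝ)) (h2sub (by simp [M2]))
  obtain ⟨q2, A2, hA2M, hq2P, hq2ne, hA2D, hA2cap⟩ := partner ((2:ℝ),(4:ℝ)) (h2sub (by simp [M2]))
  obtain ⟨q3, A3, hA3M, hq3P, hq3ne, hA3D, hA3cap⟩ := partner ((3:ℝ),(1:ℝ)) (h2sub (by simp [M2]))
  obtain ⟨q4, A4, hA4M, hq4P, hq4ne, hA4D, hA4cap⟩ := partner ((4:ℝ),(2:ℝ)) (h2sub (by simp [M2]))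
  obtain ⟨q5, A5, hA5M, hq5P, hq5ne, hA5D, hA5cap⟩ := partner ((2:ℝ),(2:ℝ)) (h2sub (by simp [M2]))
  obtain ⟨q6, A6, hA6M, hq6P, hq6ne, hA6D, hA6cap⟩ := partner ((3:ℝ),(3:ℝ)) (h2sub (by simp [M2]))
  have a1 := allowed13 h2sub hPsub hq1P hq1ne (hA1D ▸ hA1cap)
  have a2 := allowed24 h2sub hPsub hq2P hq2ne (hA2D ▸ hA2cap)
  have a3 := allowed31 h2sub hPsub hq3P hq3ne (hA3D ▸ hA3cap)
  have a4 := allowed42 h2sub hPsub hq4P hq4ne (hA4D ▸ hA4cap)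
  have a5 := allowed22 h2sub hPsub hq5P hq5ne (hA5D ▸ hA5cap)
  have a6 := allowed33 h2sub hPsub hq6P hq6ne (hA6D ▸ hA6cap)
  classical
  have hcBig : c ∈ ({(2,3),(3,2),(0,0),(5,0),(5,5),(0,5)} : Finset Pt) := by
    rcases hcM1 with rfl|rfl|rfl|rfl <;> simp
  have hT : (({(2,3),(3,2),(0,0),(5,0),(5,5),(0,5)} : Finset Pt).erase c).card ≤ 5 := by
    rw [Finset.card_erase_of_mem hcBig]
    have := card_big
    omega
  apply pigeon _ hT
    (Finset.mem_erase.mpr ⟨fun h => hcP (h ▸ hq1P), by rcases a1 with rfl|rfl|rfl <;> simp⟩)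
    (Finset.mem_erase.mpr ⟨fun h => hcP (h ▸ hq2P), by rcases a2 with rfl|rfl|rfl <;> simp⟩)
    (Finset.mem_erase.mpr ⟨fun h => hcP (h ▸ hq3P), by rcases a3 with rfl|rfl|rfl <;> simp⟩)
    (Finset.mem_erase.mpr ⟨fun h => hcP (h ▸ hq4P), by rcases a4 with rfl|rfl|rfl <;> simp⟩)
    (Finset.mem_erase.mpr ⟨fun h => hcP (h ▸ hq5P), by rcases a5 with rfl|rfl|rfl <;> simp⟩)
    (Finset.mem_erase.mpr ⟨fun h => hcP (h ▸ hq6P), by rcases a6 with rfl|rfl|rfl <;> simp⟩)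
  · intro h
    subst h
    have := inj hA1M hA2M hA1D hA2D hA1cap hA2cap hq1ne
    norm_num [Prod.ext_iff] at this
  · intro h
    subst h
    have := inj hA1M hA3M hA1D hA3D hA1cap hA3cap hq1ne
    norm_num [Prod.ext_iff] at this
  · intro h
    subst h
    have := inj hA1M hA4M hA1D hA4D hA1cap hA4cap hq1ne
    norm_num [Prod.ext_iff] at this
  · intro h
    subst h
    have := inj hA1M hA5M hA1D hA5D hA1cap hA5cap hq1ne
    norm_num [Prod.ext_iff] at this
  · intro h
    subst h
    have := inj hA1M hA6M hA1D hA6D hA1cap hA6cap hq1ne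
    norm_num [Prod.ext_iff] at this
  · intro h
    subst h
    have := inj hA2M hA3M hA2D hA3D hA2cap hA3cap hq2ne
    norm_num [Prod.ext_iff] at this
  · intro h
    subst h
    have := inj hA2M hA4M hA2D hA4D hA2cap hA4cap hq2ne
    norm_num [Prod.ext_iff] at this
  · intro h
    subst h
    have := inj hA2M hA5M hA2D hA5D hA2cap hA5cap hq2ne
    norm_num [Prod.ext_iff] at this
  · intro h
    subst h
    have := inj hA2M hA6M hA2D hA6D hA2cap hA6cap hq2ne
    norm_num [Prod.ext_iff] at this
  · intro h
    subst h
    have := inj hA3M hA4M hA3D hA4D hA3cap hA4cap hq3ne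
    norm_num [Prod.ext_iff] at this
  · intro h
    subst h
    have := inj hA3M hA5M hA3D hA5D hA3cap hA5cap hq3ne
    norm_num [Prod.ext_iff] at this
  · intro h
    subst h
    have := inj hA3M hA6M hA3D hA6D hA3cap hA6cap hq3ne
    norm_num [Prod.ext_iff] at this
  · intro h
    subst h
    have := inj hA4M hA5M hA4D hA5D hA4cap hA5cap hq4ne
    norm_num [Prod.ext_iff] at this
  · intro h
    subst h
    have := inj hA4M hA6M hA4D hA6D hA4cap hA6cap hq4ne
    norm_num [Prod.ext_iff] at this
  · intro h
    subst h
    have := inj hA5M hA6M hA5D hA6D hA5cap hA6cap hq5ne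
    norm_num [Prod.ext_iff] at this
end
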